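/- Let P be a joint probability mass function over finite discrete variables A, B, C, D, X. For fixed values a, b, x: P(b,x,a,c,d) - P(b,c,d) + 1 ≥ P(b,x,a) + P(a) - P(a,b), for any fixed c,d. That is, the natural upper bound dominates the PAG-based upper bound in Example 1. -/

import Mathlib

/-! Both steps are the same rectangle inequality: for a nonnegative array `f`, a row sum plus a
column sum counts the rectangle `f i j` twice and misses only nonnegative entries, so it is at
most `f i j` plus the total. Applied to `P` indexed by `(a, x)` and `(c, d)` at fixed `b`, it gives
`P(b,x,a) - P(b) ≤ P(b,x,a,c,d) - P(b,c,d)`; applied to the `(a, b)` marginal, whose total is `1`,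
it gives `P(a) + P(b) ≤ P(a,b) + 1`. -/

open Finset

theorem row_sum_add_col_sum_le {α β : Type*} [Fintype α] [Fintype β] (f : α → β → ℝ)
    (hf : ∀ i j, 0 ≤ f i j) (i : α) (j : β) :
    ∑ j', f i j' + ∑ i', f i' j ≤ f i j + ∑ i', ∑ j', f i' j' := by
  have hrow : ∀ i', 0 ≤ ∑ j', f i' j' - f i' j := fun i' =>
    sub_nonneg.mpr (single_le_sum (fun j' _ => hf i' j') (mem_univ j))
  have key : ∑ j', f i j' - f i j ≤ ∑ i', (∑ j', f i' j' - f i' j) :=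
    single_le_sum (fun i' _ => hrow i') (mem_univ i)
  rw [sum_sub_distrib] at key
  linarith

/-- the natural upper bound dominates the PAG-based upper bound
in Example 1: `P(b,x,a,c,d) - P(b,c,d) + 1 ≥ P(b,x,a) + P(a) - P(a,b)`. -/
theorem natural_dominates_pag_upper {A B X C D : Type*}
    [Fintype A] [Fintype B] [Fintype X] [Fintype C] [Fintype D]
    (P : A × B × X × C × D → ℝ) (hpos : ∀ v, 0 ≤ P v) (hsum : ∑ v, P v = 1)
    (a : A) (b : B) (x : X) (c : C) (d : D) :
    P (a, b, x, c, d) - (∑ a', ∑ x', P (a', b, x', c, d)) + 1 ≥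
      (∑ c', ∑ d', P (a, b, x, c', d'))
        + (∑ b', ∑ x', ∑ c', ∑ d', P (a, b', x', c', d'))
        - (∑ x', ∑ c', ∑ d', P (a, b, x', c', d')) := by
  have hcond := row_sum_add_col_sum_le (fun (p : A × X) (q : C × D) => P (p.1, b, p.2, q.1, q.2))
    (fun _ _ => hpos _) (a, x) (c, d)
  simp only [Fintype.sum_prod_type] at hcond
  have hmarg := row_sum_add_col_sum_le (fun a' b' => ∑ x', ∑ c', ∑ d', P (a', b', x', c', d'))
    (fun _ _ => sum_nonneg fun _ _ => sum_nonneg fun _ _ => sum_nonneg fun _ _ => hpos _) a b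
  have htotal : ∑ a', ∑ b', ∑ x', ∑ c', ∑ d', P (a', b', x', c', d') = 1 := by
    simpa only [Fintype.sum_prod_type] using hsum
  rw [htotal] at hmarg
  linarith
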